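/- arXiv:math/0606004 — 3 statements merged into one kernel-verified Lean document; each statement's English description precedes it below -/
import Mathlib

section
/- Let (𝒫,𝒬) be a strong parallelepiped structure on a nonempty set X, with fiber group F. For every x ∈ X and u ∈ F there is a unique point y ∈ X with (x,x,x,y) ∈ 𝒫 and [x,x,x,y] = u; denote it u·x. Then the map (u,x) ↦ u·x is an action of the abelian group F on X; this action maps each fiber of π to itself, and it acts freely and transitively on each fiber. -/
open scoped Pointwise

namespace HK

/-- Quadruples of elements of `X`, indexed by the vertices `00, 01, 10, 11` of the square. -/
abbrev Quad (X : Type) := X × X × X × X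

/-- Vertices of the cube `{0,1}³`. -/
abbrev Vtx := Fin 3 → Bool

/-- Elements of `X^{[3]} = X⁸`, indexed by the vertices of the cube. -/
abbrev Cube (X : Type) := Vtx → X

variable {X Y : Type}

/-- Apply a map coordinatewise to a quadruple. -/
def map4 (f : X → Y) (p : Quad X) : Quad Y := (f p.1, f p.2.1, f p.2.2.1, f p.2.2.2)

/-- Apply a map coordinatewise to a cube. -/
def mapCube (f : X → Y) (x : Cube X) : Cube Y := fun v => f (x v)

/-- A weak parallelogram structure: the relation `(x00,x01) ∼ (x10,x11) ↔ (x00,x01,x10,x11) ∈ P`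
is an equivalence relation, `P` is invariant under exchanging the two middle entries, and
any three points can be completed to a parallelogram. -/
def IsWeakParallelogram (P : Set (Quad X)) : Prop :=
  (∀ a b : X, (a, b, a, b) ∈ P) ∧
  (∀ a b c d : X, (a, b, c, d) ∈ P → (c, d, a, b) ∈ P) ∧
  (∀ a b c d e f : X, (a, b, c, d) ∈ P → (c, d, e, f) ∈ P → (a, b, e, f) ∈ P) ∧
  (∀ a b c d : X, (a, b, c, d) ∈ P → (a, c, b, d) ∈ P) ∧
  (∀ a b c : X, ∃ d, (a, b, c, d) ∈ P)

/-- A strong parallelogram structure: the completing fourth point is unique. -/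
def IsStrongParallelogram (P : Set (Quad X)) : Prop :=
  IsWeakParallelogram P ∧ ∀ a b c : X, ∃! d, (a, b, c, d) ∈ P

/-- The entry of a quadruple at a vertex of the square. -/
def quadAt (p : Quad X) : Bool → Bool → X
  | false, false => p.1
  | false, true => p.2.1
  | true, false => p.2.2.1
  | true, true => p.2.2.2

/-- The cube whose face `ε₁ = 0` is `p` and whose face `ε₁ = 1` is `q`. -/
def joinQuad (p q : Quad X) : Cube X :=
  fun v => if v 0 = false then quadAt p (v 1) (v 2) else quadAt q (v 1) (v 2)

/-- The vertex of the cube with value `b` at coordinate `i` and values `u,v` at the two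
remaining coordinates, taken in increasing order. -/
def insert3 (i : Fin 3) (b u v : Bool) : Vtx :=
  if i = 0 then ![b, u, v] else if i = 1 then ![u, b, v] else ![u, v, b]

/-- The face `{v : v i = b}` of a cube, as a quadruple in lexicographic order. -/
def face (x : Cube X) (i : Fin 3) (b : Bool) : Quad X :=
  (x (insert3 i b false false), x (insert3 i b false true),
   x (insert3 i b true false), x (insert3 i b true true))

/-- The permutations of the vertices of the cube induced by Euclidean isometries of the unit
cube: a permutation of the three coordinates composed with flips of some coordinates. -/
def cubeSym (σ : Equiv.Perm (Fin 3)) (c : Vtx) (v : Vtx) : Vtx :=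
  fun j => xor (v (σ j)) (c j)

/-- A weak parallelepiped structure `(P, Q)`: every face of an element of `Q` lies in `P`;
`Q` is invariant under the Euclidean permutations of the cube; the relation `≈` on `P`
(`p ≈ q ↔ joinQuad p q ∈ Q`) is an equivalence relation; and seven points whose three
determined faces lie in `P` can be completed to an element of `Q`. -/
def IsWeakParallelepiped (P : Set (Quad X)) (Q : Set (Cube X)) : Prop :=
  IsWeakParallelogram P ∧
  (∀ x ∈ Q, ∀ (i : Fin 3) (b : Bool), face x i b ∈ P) ∧
  (∀ (σ : Equiv.Perm (Fin 3)) (c : Vtx), ∀ x ∈ Q, (fun v => x (cubeSym σ c v)) ∈ Q) ∧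
  (∀ p ∈ P, joinQuad p p ∈ Q) ∧
  (∀ p q : Quad X, joinQuad p q ∈ Q → joinQuad q p ∈ Q) ∧
  (∀ p q r : Quad X, joinQuad p q ∈ Q → joinQuad q r ∈ Q → joinQuad p r ∈ Q) ∧
  (∀ x000 x001 x010 x011 x100 x101 x110 : X,
    (x000, x001, x010, x011) ∈ P → (x000, x010, x100, x110) ∈ P →
    (x000, x001, x100, x101) ∈ P →
    ∃ x111, joinQuad (x000, x001, x010, x011) (x100, x101, x110, x111) ∈ Q)

/-- A strong parallelepiped structure: the completing eighth point is unique. -/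
def IsStrongParallelepiped (P : Set (Quad X)) (Q : Set (Cube X)) : Prop :=
  IsWeakParallelepiped P Q ∧
  ∀ x000 x001 x010 x011 x100 x101 x110 : X,
    (x000, x001, x010, x011) ∈ P → (x000, x010, x100, x110) ∈ P →
    (x000, x001, x100, x101) ∈ P →
    ∃! x111, joinQuad (x000, x001, x010, x011) (x100, x101, x110, x111) ∈ Q

/-- The setoid on `X²` given by the parallelogram relation `∼`. -/
def baseSetoid (P : Set (Quad X)) (hP : IsWeakParallelogram P) : Setoid (X × X) where
  r p q := (p.1, p.2, q.1, q.2) ∈ P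
  iseqv := ⟨fun p => hP.1 p.1 p.2,
            fun h => hP.2.1 _ _ _ _ h,
            fun h h' => hP.2.2.1 _ _ _ _ _ _ h h'⟩

/-- The base `B = X²/∼` of a weak parallelogram structure. -/
def Base (P : Set (Quad X)) (hP : IsWeakParallelogram P) : Type := Quotient (baseSetoid P hP)

/-- The class `⟨x,y⟩ ∈ B` of a pair `(x,y)`. -/
def cls (P : Set (Quad X)) (hP : IsWeakParallelogram P) (x y : X) : Base P hP :=
  Quotient.mk (baseSetoid P hP) (x, y)

/-- The Gowers-type sum over parallelograms attached to a finitely supported `f : X → ℂ`. -/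
noncomputable def gSum2 (P : Set (Quad X)) (f : X →₀ ℂ) : ℂ :=
  ∑ᶠ q ∈ P, f q.1 * (starRingEnd ℂ) (f q.2.1) * (starRingEnd ℂ) (f q.2.2.1) * f q.2.2.2

/-- The seminorm `‖f‖_P = (gSum2 P f)^{1/4}`. -/
noncomputable def pNorm (P : Set (Quad X)) (f : X →₀ ℂ) : ℝ :=
  (gSum2 P f).re ^ ((1 : ℝ) / 4)

/-- `C^{|ε|} z`: conjugate `z` when the vertex `v` has an odd number of `1` entries. -/
noncomputable def cConjFactor (v : Vtx) (z : ℂ) : ℂ :=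
  if xor (v 0) (xor (v 1) (v 2)) then (starRingEnd ℂ) z else z

/-- The Gowers-type sum over parallelepipeds attached to a finitely supported `f : X → ℂ`. -/
noncomputable def gSum3 (Q : Set (Cube X)) (f : X →₀ ℂ) : ℂ :=
  ∑ᶠ x ∈ Q, ∏ v : Vtx, cConjFactor v (f (x v))

/-- The seminorm `‖f‖_Q = (gSum3 Q f)^{1/8}`. -/
noncomputable def qNorm (Q : Set (Cube X)) (f : X →₀ ℂ) : ℝ :=
  (gSum3 Q f).re ^ ((1 : ℝ) / 8)

/-- The structure group of a parallelepiped structure, as a set of bijections of `X`: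
those `g` mapping every parallelogram to an equivalent parallelogram. -/
def structSet (P : Set (Quad X)) (Q : Set (Cube X)) : Set (Equiv.Perm X) :=
  {g | ∀ p ∈ P, map4 g p ∈ P ∧ joinQuad (map4 g p) p ∈ Q}

/-- `x` and `y` lie in the same fiber of `π : X → B`, `π(x) = ⟨i,x⟩`. -/
def sameFiber (P : Set (Quad X)) (i x y : X) : Prop := (i, x, i, y) ∈ P

/-- A vertical quadruple: all four points lie in one fiber. -/
def VerticalQ (P : Set (Quad X)) (i : X) (w : Quad X) : Prop :=
  sameFiber P i w.1 w.2.1 ∧ sameFiber P i w.2.1 w.2.2.1 ∧ sameFiber P i w.2.2.1 w.2.2.2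

/-- `y = u·x` where `u = [w]` is the class of the vertical parallelogram `w`:
`(x,x,x,y)` is a parallelogram equivalent to `w`. -/
def actsRel (P : Set (Quad X)) (Q : Set (Cube X)) (w : Quad X) (x y : X) : Prop :=
  (x, x, x, y) ∈ P ∧ joinQuad (x, x, x, y) w ∈ Q

section Groups

variable (G : Type) [Group G]

/-- The diagonal embedding `G → G^{[2]}`. -/
def diagHom2 : G →* Quad G where
  toFun g := (g, g, g, g)
  map_one' := rfl
  map_mul' _ _ := rfl

/-- The diagonal embedding `G → G^{[3]}`. -/
def diagHom3 : G →* Cube G where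
  toFun g := fun _ => g
  map_one' := rfl
  map_mul' _ _ := rfl

/-- The two dimensional edge group `G^{[2,1]}`. -/
def edgeGroup2 : Subgroup (Quad G) :=
  Subgroup.closure
    {q : Quad G | ∃ g : G, q = (g, g, 1, 1) ∨ q = (g, 1, g, 1) ∨ q = (g, g, g, g)}

/-- The second commutator subgroup `G₃ = [G, G₂]`. -/
def secondCommutator : Subgroup G := ⁅(⊤ : Subgroup G), commutator G⁆

variable {G}

/-- The edge group `F^{[2,1]}` of a subgroup `F ≤ G`, inside `G^{[2]}`. -/
def edgeGroup2Of (F : Subgroup G) : Subgroup (Quad G) :=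
  Subgroup.closure
    {q : Quad G | ∃ u ∈ F, q = (u, u, 1, 1) ∨ q = (u, 1, u, 1) ∨ q = (u, u, u, u)}

/-- `F^{[2]} = F⁴` as a subgroup of `G^{[2]}`. -/
def quadSub (F : Subgroup G) : Subgroup (Quad G) := F.prod (F.prod (F.prod F))

/-- Faces of the cube `{0,1}³`. -/
def IsFace3 (α : Set Vtx) : Prop := ∃ (i : Fin 3) (b : Bool), α = {v : Vtx | v i = b}

/-- Edges of the cube `{0,1}³`. -/
def IsEdge3 (α : Set Vtx) : Prop :=
  ∃ (i j : Fin 3) (b c : Bool), i ≠ j ∧ α = {v : Vtx | v i = b ∧ v j = c}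

open Classical in
/-- The element `g^{[3,α]}` of `G^{[3]}`, with coordinate `g` on `α` and `1` elsewhere. -/
noncomputable def cubeElt (α : Set Vtx) (g : G) : Cube G :=
  fun v => if v ∈ α then g else 1

variable (G)

/-- The face group `G^{[3,2]}`, generated by the `g^{[3,f]}` for faces `f` of the cube. -/
noncomputable def faceGroup : Subgroup (Cube G) :=
  Subgroup.closure {x : Cube G | ∃ (g : G) (α : Set Vtx), IsFace3 α ∧ x = cubeElt α g}

variable {G}

/-- The edge group `F^{[3,1]}` of a subgroup `F ≤ G`, generated by the `u^{[3,e]}` for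
`u ∈ F` and edges `e` of the cube. -/
noncomputable def edgeGroup3 (F : Subgroup G) : Subgroup (Cube G) :=
  Subgroup.closure {x : Cube G | ∃ u ∈ F, ∃ α : Set Vtx, IsEdge3 α ∧ x = cubeElt α u}

end Groups

/-- The data realizing `(PY, QY)` as the nilparallelepiped structure associated to
`G`, `F`, `Γ` via the coset projection `p : G → Y ≅ G/Γ`. -/
def NilWitness (G : Type) [Group G] (F Γ : Subgroup G) {Y : Type} (p : G → Y)
    (PY : Set (Quad Y)) (QY : Set (Cube Y)) : Prop :=
  commutator G ≤ F ∧ F ≤ Subgroup.center G ∧ Γ ⊓ F = ⊥ ∧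
  Function.Surjective p ∧ (∀ g g' : G, p g = p g' ↔ g⁻¹ * g' ∈ Γ) ∧
  PY = map4 p '' ((edgeGroup2 G : Set (Quad G)) * (quadSub F : Set (Quad G))) ∧
  QY = mapCube p '' ((faceGroup G : Set (Cube G)) * (edgeGroup3 F : Set (Cube G)))

/-- `(PY, QY)` is a nilparallelepiped structure. -/
def IsNilStructure {Y : Type} (PY : Set (Quad Y)) (QY : Set (Cube Y)) : Prop :=
  ∃ (G : Type) (inst : Group G) (F Γ : @Subgroup G inst) (p : G → Y),
    @NilWitness G inst F Γ Y p PY QY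

/-- A splitting of the exact sequence `0 → F → P_s → B → 0` for `s = ⟨a₀, b₀⟩`, encoded
by a lift `ψ : X → 𝒫_s` of a homomorphism section `φ : B → P_s` of `q_s`:
`ψ x` is a parallelogram in `𝒫_s` representing the class `φ(π(x))`. -/
def IsSplittingAt (P : Set (Quad X)) (Q : Set (Cube X)) (i a₀ b₀ : X) : Prop :=
  ∃ ψ : X → Quad X,
    (∀ x, ψ x ∈ P) ∧
    (∀ x, (a₀, b₀, (ψ x).1, (ψ x).2.1) ∈ P) ∧
    (∀ x, ((ψ x).1, (ψ x).2.2.1, i, x) ∈ P) ∧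
    (∀ x y, (i, x, i, y) ∈ P → joinQuad (ψ x) (ψ y) ∈ Q) ∧
    (∀ x1 x2 x3, (x1, x3, i, x2) ∈ P →
      ∃ c d, joinQuad ((ψ x1).2.2.1, (ψ x1).2.2.2, c, d) (ψ x2) ∈ Q ∧
        joinQuad ((ψ x1).1, (ψ x1).2.1, c, d) (ψ x3) ∈ Q)

/-- `(B, c)` is a realization of the base group of the parallelogram structure `P`,
`c x y` realizing the class `⟨x,y⟩`. -/
def IsBaseRealization (P : Set (Quad X)) (B : Type) [AddCommGroup B] (c : X → X → B) : Prop :=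
  (Function.Surjective fun p : X × X => c p.1 p.2) ∧
  (∀ a b a' b' : X, c a b = c a' b' ↔ (a, b, a', b') ∈ P) ∧
  (∀ a b d : X, c a b + c b d = c a d)

/-- `(F, fl)` is a realization of the fiber group of the parallelepiped structure `(P, Q)`:
`fl` maps vertical parallelograms onto `F`, separates exactly the `≈`-classes, and is
additive with respect to the composition of vertical parallelograms. -/
def IsFiberRealization (P : Set (Quad X)) (Q : Set (Cube X)) (i : X) (F : Type)
    [AddCommGroup F] (fl : Quad X → F) : Prop :=
  (∀ u : F, ∃ w, VerticalQ P i w ∧ fl w = u) ∧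
  (∀ w w' : Quad X, VerticalQ P i w → VerticalQ P i w' →
    (fl w = fl w' ↔ joinQuad w w' ∈ Q)) ∧
  (∀ x0 x1 x2 x3 x4 x5 : X, sameFiber P i x0 x1 → sameFiber P i x1 x2 →
    sameFiber P i x2 x3 → sameFiber P i x3 x4 → sameFiber P i x4 x5 →
    fl (x0, x1, x2, x3) + fl (x2, x3, x4, x5) = fl (x0, x1, x4, x5))

/-- A divisible (equivalently, injective) abelian group. -/
def IsDivisibleGroup (F : Type) [AddCommGroup F] : Prop :=
  ∀ (u : F) (n : ℕ), 0 < n → ∃ v : F, n • v = u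

/-- A projective abelian group (projective as a `ℤ`-module). -/
def IsProjectiveAdd (B : Type) [AddCommGroup B] : Prop := Module.Projective ℤ B

/-!
Reflecting a cube in a diagonal plane turns `p ≈ q` (i.e. `joinQuad p q ∈ Q`) into an `≈`
between the "transposes" of `p` and `q`. This makes the product of the fiber group well defined
and, starting from degenerate cubes `joinQuad p p`, gives `[p,q,p,r] = [q,q,q,r]` for `p, q, r`
in one fiber. Hence `[x,x,y,z] = [y,y,y,z]` and `[y,z,x,z] = [x,x,x,y]`, and multiplying gives
the action law `[x,x,x,z] = [y,y,y,z] · [x,x,x,y]`. The point `u·x` is the unique eighth vertex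
of the cube whose three faces through `w₀₀` are `w`, `(w₀₀,w₀₁,x,x)` and `(w₀₀,w₁₀,x,x)`.
-/

def IsCubeSymmetric (Q : Set (Cube X)) : Prop :=
  ∀ (σ : Equiv.Perm (Fin 3)) (c : Vtx), ∀ x ∈ Q, (fun v => x (cubeSym σ c v)) ∈ Q

namespace IsCubeSymmetric

variable {Q : Set (Cube X)} {a b c d a' b' c' d' : X}

lemma joinQuad_transpose01 (hQ : IsCubeSymmetric Q)
    (h : joinQuad (a, b, c, d) (a', b', c', d') ∈ Q) :
    joinQuad (a, b, a', b') (c, d, c', d') ∈ Q := by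
  convert hQ (Equiv.swap 0 1) (fun _ => false) _ h using 1
  funext v
  cases h0 : v 0 <;> cases h1 : v 1 <;> cases h2 : v 2 <;>
    simp [joinQuad, cubeSym, quadAt, Equiv.swap_apply_of_ne_of_ne, h0, h1, h2]

lemma joinQuad_transpose02 (hQ : IsCubeSymmetric Q)
    (h : joinQuad (a, b, c, d) (a', b', c', d') ∈ Q) :
    joinQuad (a, a', c, c') (b, b', d, d') ∈ Q := by
  convert hQ (Equiv.swap 0 2) (fun _ => false) _ h using 1
  funext v
  cases h0 : v 0 <;> cases h1 : v 1 <;> cases h2 : v 2 <;>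
    simp [joinQuad, cubeSym, quadAt, Equiv.swap_apply_of_ne_of_ne, h0, h1, h2]

lemma joinQuad_transpose12 (hQ : IsCubeSymmetric Q)
    (h : joinQuad (a, b, c, d) (a', b', c', d') ∈ Q) :
    joinQuad (a, c, b, d) (a', c', b', d') ∈ Q := by
  convert hQ (Equiv.swap 1 2) (fun _ => false) _ h using 1
  funext v
  cases h0 : v 0 <;> cases h1 : v 1 <;> cases h2 : v 2 <;>
    simp [joinQuad, cubeSym, quadAt, Equiv.swap_apply_of_ne_of_ne, h0, h1, h2]

lemma joinQuad_reflect2 (hQ : IsCubeSymmetric Q)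
    (h : joinQuad (a, b, c, d) (a', b', c', d') ∈ Q) :
    joinQuad (b, a, d, c) (b', a', d', c') ∈ Q := by
  convert hQ (Equiv.refl _) ![false, false, true] _ h using 1
  funext v
  cases h0 : v 0 <;> cases h1 : v 1 <;> cases h2 : v 2 <;>
    simp [joinQuad, cubeSym, quadAt, h0, h1, h2]

end IsCubeSymmetric

namespace IsWeakParallelogram

variable {P : Set (Quad X)} {i a b c d x y : X}

lemma sameFiber_symm (hP : IsWeakParallelogram P) (h : sameFiber P i a b) :
    sameFiber P i b a :=
  hP.2.1 _ _ _ _ h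

lemma sameFiber_trans (hP : IsWeakParallelogram P) (hab : sameFiber P i a b)
    (hbc : sameFiber P i b c) : sameFiber P i a c :=
  hP.2.2.1 _ _ _ _ _ _ hab hbc

lemma sameFiber_refl (hP : IsWeakParallelogram P) (i a : X) : sameFiber P i a a :=
  hP.1 i a

/-- Both pairs represent `⟨i,i⟩ ∈ B`. -/
lemma mem_of_sameFiber (hP : IsWeakParallelogram P) (hab : sameFiber P i a b)
    (hcd : sameFiber P i c d) : (a, b, c, d) ∈ P :=
  hP.2.2.1 _ _ _ _ _ _ (hP.2.1 _ _ _ _ (hP.2.2.2.1 _ _ _ _ hab)) (hP.2.2.2.1 _ _ _ _ hcd)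

lemma mem_of_verticalQ (hP : IsWeakParallelogram P) {w : Quad X} (hw : VerticalQ P i w) :
    w ∈ P :=
  hP.mem_of_sameFiber hw.1 hw.2.2

lemma sameFiber_of_mem (hP : IsWeakParallelogram P) (h : (x, x, x, y) ∈ P) :
    sameFiber P i x y :=
  hP.2.2.2.1 _ _ _ _ (hP.2.2.1 _ _ _ _ _ _ (hP.2.2.2.1 _ _ _ _ (hP.1 i x)) h)

end IsWeakParallelogram

namespace IsWeakParallelepiped

variable {P : Set (Quad X)} {Q : Set (Cube X)} {i a b c d e f x y z : X}

lemma isWeakParallelogram (h : IsWeakParallelepiped P Q) : IsWeakParallelogram P := h.1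

lemma isCubeSymmetric (h : IsWeakParallelepiped P Q) : IsCubeSymmetric Q := h.2.2.1

lemma joinQuad_self (h : IsWeakParallelepiped P Q) {p : Quad X} (hp : p ∈ P) :
    joinQuad p p ∈ Q :=
  h.2.2.2.1 p hp

lemma joinQuad_symm (h : IsWeakParallelepiped P Q) {p q : Quad X} (hpq : joinQuad p q ∈ Q) :
    joinQuad q p ∈ Q :=
  h.2.2.2.2.1 p q hpq

lemma joinQuad_trans (h : IsWeakParallelepiped P Q) {p q r : Quad X}
    (hpq : joinQuad p q ∈ Q) (hqr : joinQuad q r ∈ Q) : joinQuad p r ∈ Q :=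
  h.2.2.2.2.2.1 p q r hpq hqr

/-- Well-definedness of the product `[a,b,c,d] · [c,d,e,f] = [a,b,e,f]`. -/
lemma joinQuad_concat (h : IsWeakParallelepiped P Q) {a' b' c' d' e' f' : X}
    (h₁ : joinQuad (a, b, c, d) (a', b', c', d') ∈ Q)
    (h₂ : joinQuad (c, d, e, f) (c', d', e', f') ∈ Q) :
    joinQuad (a, b, e, f) (a', b', e', f') ∈ Q :=
  h.isCubeSymmetric.joinQuad_transpose01 <| h.joinQuad_trans
    (h.isCubeSymmetric.joinQuad_transpose01 h₁) (h.isCubeSymmetric.joinQuad_transpose01 h₂)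

lemma joinQuad_shift (h : IsWeakParallelepiped P Q) (hab : sameFiber P i a b)
    (hbc : sameFiber P i b c) : joinQuad (a, b, a, c) (b, b, b, c) ∈ Q := by
  have hP := h.isWeakParallelogram
  have hQ := h.isCubeSymmetric
  have hab_bb : joinQuad (a, b, a, b) (b, b, b, b) ∈ Q :=
    hQ.joinQuad_transpose01 (h.joinQuad_self (hP.mem_of_sameFiber hab (hP.sameFiber_refl i b)))
  have hbc_bb : joinQuad (b, b, c, c) (b, b, b, b) ∈ Q :=
    hQ.joinQuad_transpose02 (h.joinQuad_self
      (hP.mem_of_sameFiber (hP.sameFiber_refl i b) (hP.sameFiber_symm hbc)))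
  exact hQ.joinQuad_transpose02 (h.joinQuad_trans hab_bb (h.joinQuad_symm hbc_bb))

lemma actsRel_congr (h : IsWeakParallelepiped P Q) {w w' : Quad X} (hww' : joinQuad w w' ∈ Q)
    (hw : actsRel P Q w x y) : actsRel P Q w' x y :=
  ⟨hw.1, h.joinQuad_trans hw.2 hww'⟩

lemma actsRel_const (h : IsWeakParallelepiped P Q) (x a : X) : actsRel P Q (a, a, a, a) x x :=
  ⟨h.isWeakParallelogram.1 x x,
    h.isCubeSymmetric.joinQuad_transpose02 (h.joinQuad_self (h.isWeakParallelogram.1 x a))⟩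

lemma sameFiber_of_actsRel (h : IsWeakParallelepiped P Q) {w : Quad X}
    (hw : actsRel P Q w x y) : sameFiber P i x y :=
  h.isWeakParallelogram.sameFiber_of_mem hw.1

lemma actsRel_comp (h : IsWeakParallelepiped P Q)
    (hxy : actsRel P Q (c, d, e, f) x y) (hyz : actsRel P Q (a, b, c, d) y z) :
    actsRel P Q (a, b, e, f) x z := by
  have hP := h.isWeakParallelogram
  have hQ := h.isCubeSymmetric
  have sxy : sameFiber P x x y := h.sameFiber_of_actsRel hxy
  have syz : sameFiber P x y z := h.sameFiber_of_actsRel hyz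
  have left : joinQuad (x, x, y, z) (a, b, c, d) ∈ Q :=
    h.joinQuad_trans (hQ.joinQuad_transpose12 (h.joinQuad_shift sxy syz)) hyz.2
  have right : joinQuad (y, z, x, z) (c, d, e, f) ∈ Q :=
    h.joinQuad_trans (hQ.joinQuad_reflect2
        (h.joinQuad_shift (hP.sameFiber_symm syz) (hP.sameFiber_symm sxy)))
      (h.joinQuad_trans (hQ.joinQuad_transpose12
        (h.joinQuad_shift (hP.sameFiber_symm sxy) sxy)) hxy.2)
  exact ⟨hP.mem_of_sameFiber (hP.sameFiber_refl x x) (hP.sameFiber_trans sxy syz),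
    h.joinQuad_concat left right⟩

lemma exists_actsRel_of_sameFiber (h : IsWeakParallelepiped P Q) (hxy : sameFiber P i x y) :
    ∃ w : Quad X, VerticalQ P i w ∧ actsRel P Q w x y := by
  have hP := h.isWeakParallelogram
  have hxxxy : (x, x, x, y) ∈ P := hP.mem_of_sameFiber (hP.sameFiber_refl i x) hxy
  have hx : sameFiber P i x x := hP.sameFiber_refl i x
  exact ⟨(x, x, x, y), ⟨hx, hx, hxy⟩, hxxxy, h.joinQuad_self hxxxy⟩

lemma joinQuad_mem_of_actsRel (h : IsWeakParallelepiped P Q) {w w' : Quad X}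
    (hw : actsRel P Q w x y) (hw' : actsRel P Q w' x y) : joinQuad w w' ∈ Q :=
  h.joinQuad_trans (h.joinQuad_symm hw.2) hw'.2

end IsWeakParallelepiped

lemma IsStrongParallelepiped.existsUnique_actsRel {P : Set (Quad X)} {Q : Set (Cube X)} {i : X}
    (h : IsStrongParallelepiped P Q) {w : Quad X} (hw : VerticalQ P i w) (x : X) :
    ∃! y, actsRel P Q w x y := by
  obtain ⟨a, b, c, d⟩ := w
  obtain ⟨hab, hbc, hcd⟩ := hw
  have hP := h.1.isWeakParallelogram
  have hx : sameFiber P i x x := hP.sameFiber_refl i x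
  obtain ⟨y, hy, hy_unique⟩ := h.2 a b c d x x x (hP.mem_of_sameFiber hab hcd)
    (hP.mem_of_sameFiber (hP.sameFiber_trans hab hbc) hx) (hP.mem_of_sameFiber hab hx)
  have hyQ : joinQuad (x, x, x, y) (a, b, c, d) ∈ Q := h.1.joinQuad_symm hy
  exact ⟨y, ⟨h.1.2.1 _ hyQ 0 false, hyQ⟩, fun y' hy' => hy_unique y' (h.1.joinQuad_symm hy'.2)⟩

theorem fiber_group_action_general (X : Type)
    (P : Set (Quad X)) (Q : Set (Cube X)) (h : IsStrongParallelepiped P Q) (i : X) :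
    (∀ w : Quad X, VerticalQ P i w → w ∈ P) ∧
    (∀ (w : Quad X) (x : X), VerticalQ P i w → ∃! y, actsRel P Q w x y) ∧
    (∀ (w w' : Quad X) (x y : X), VerticalQ P i w → VerticalQ P i w' →
      joinQuad w w' ∈ Q → actsRel P Q w x y → actsRel P Q w' x y) ∧
    (∀ x a : X, actsRel P Q (a, a, a, a) x x) ∧
    (∀ a b c d e f x y z : X,
      sameFiber P i a b → sameFiber P i b c → sameFiber P i c d →
      sameFiber P i d e → sameFiber P i e f →
      actsRel P Q (c, d, e, f) x y → actsRel P Q (a, b, c, d) y z →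
      actsRel P Q (a, b, e, f) x z) ∧
    (∀ (w : Quad X) (x y : X), VerticalQ P i w → actsRel P Q w x y → sameFiber P i x y) ∧
    (∀ x y : X, sameFiber P i x y → ∃ w : Quad X, VerticalQ P i w ∧ actsRel P Q w x y) ∧
    (∀ (w w' : Quad X) (x y : X), VerticalQ P i w → VerticalQ P i w' →
      actsRel P Q w x y → actsRel P Q w' x y → joinQuad w w' ∈ Q) := by
  have hW := h.1
  exact ⟨fun _ hw => hW.isWeakParallelogram.mem_of_verticalQ hw,
    fun _ x hw => h.existsUnique_actsRel hw x,
    fun _ _ _ _ _ _ hww' hw => hW.actsRel_congr hww' hw,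
    hW.actsRel_const,
    fun _ _ _ _ _ _ _ _ _ _ _ _ _ _ hxy hyz => hW.actsRel_comp hxy hyz,
    fun _ _ _ _ hw => hW.sameFiber_of_actsRel hw,
    fun _ _ hxy => hW.exists_actsRel_of_sameFiber hxy,
    fun _ _ _ _ _ _ hw hw' => hW.joinQuad_mem_of_actsRel hw hw'⟩

/-- For a strong parallelepiped structure with basepoint `i`: any four
points of one fiber form a parallelogram; for every `x` and every class `u = [w]` of a
vertical parallelogram there is a unique `y = u·x` with `[x,x,x,y] = u`; this defines an
action of the (abelian) fiber group `F` on `X` (it is well defined on classes, the trivial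
class acts as the identity, and it is compatible with the multiplication of `F`); the action
maps each fiber to itself, and it is transitive and free on each fiber. -/
theorem fiber_group_action (X : Type) [Nonempty X]
    (P : Set (Quad X)) (Q : Set (Cube X)) (h : IsStrongParallelepiped P Q) (i : X) :
    (∀ w : Quad X, VerticalQ P i w → w ∈ P) ∧
    (∀ (w : Quad X) (x : X), VerticalQ P i w → ∃! y, actsRel P Q w x y) ∧
    (∀ (w w' : Quad X) (x y : X), VerticalQ P i w → VerticalQ P i w' →
      joinQuad w w' ∈ Q → actsRel P Q w x y → actsRel P Q w' x y) ∧
    (∀ x a : X, actsRel P Q (a, a, a, a) x x) ∧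
    (∀ a b c d e f x y z : X,
      sameFiber P i a b → sameFiber P i b c → sameFiber P i c d →
      sameFiber P i d e → sameFiber P i e f →
      actsRel P Q (c, d, e, f) x y → actsRel P Q (a, b, c, d) y z →
      actsRel P Q (a, b, e, f) x z) ∧
    (∀ (w : Quad X) (x y : X), VerticalQ P i w → actsRel P Q w x y → sameFiber P i x y) ∧
    (∀ x y : X, sameFiber P i x y → ∃ w : Quad X, VerticalQ P i w ∧ actsRel P Q w x y) ∧
    (∀ (w w' : Quad X) (x y : X), VerticalQ P i w → VerticalQ P i w' →
      actsRel P Q w x y → actsRel P Q w' x y → joinQuad w w' ∈ Q) :=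
  fiber_group_action_general X P Q h i

end HK
end

section
/- Let (𝒫,𝒬) be a strong parallelepiped structure on a nonempty set X with base B, and let s ∈ B. Set X_s = {(x,y) ∈ X² : ⟨x,y⟩ = s} and, under the identification of X^{[3]} = X⁸ with (X²)⁴ given by grouping coordinates in consecutive pairs, set 𝒬_s = 𝒬 ∩ (X_s)⁴ = {x ∈ 𝒬 : ⟨x000,x001⟩ = s}. Then 𝒬_s is a weak parallelogram structure on the set X_s. -/
open scoped Pointwise

namespace HK

variable {X Y : Type}

/-!
Pairs of class `s = ⟨a,b⟩` are the points of `X_s`, and a quadruple of them is a cube of `X`.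
Reflexivity, symmetry and transitivity of `𝒬_s` are those of `≈`, and the middle swap is the
cube symmetry exchanging the first two coordinates. To complete `u, v, w ∈ X_s`, first complete
the square `u.1, v.1, w.1` to `x110` in `𝒫`, then the cube to `x111`; its face `ε₂ = 1`
shows `⟨x110, x111⟩ = ⟨v.1, v.2⟩ = s`.
-/

variable {X : Type} {P : Set (Quad X)} {Q : Set (Cube X)}

theorem IsWeakParallelogram.mem_of_mem_of_mem (hP : IsWeakParallelogram P) {a b c d e f : X}
    (h₁ : (a, b, c, d) ∈ P) (h₂ : (a, b, e, f) ∈ P) : (c, d, e, f) ∈ P :=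
  hP.2.2.1 _ _ _ _ _ _ (hP.2.1 _ _ _ _ h₁) h₂

theorem joinQuad_swap_faces_eq (a₁ a₂ b₁ b₂ c₁ c₂ d₁ d₂ : X) :
    joinQuad (a₁, a₂, c₁, c₂) (b₁, b₂, d₁, d₂) =
      fun v => joinQuad (a₁, a₂, b₁, b₂) (c₁, c₂, d₁, d₂)
        (cubeSym (Equiv.swap 0 1) (fun _ => false) v) := by
  funext v
  cases hv0 : v 0 <;> cases hv1 : v 1 <;> cases hv2 : v 2 <;>
    simp [joinQuad, quadAt, cubeSym, hv0, hv1, hv2, Equiv.swap_apply_def]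

theorem IsWeakParallelepiped.joinQuad_swap_mem (hPQ : IsWeakParallelepiped P Q)
    {a₁ a₂ b₁ b₂ c₁ c₂ d₁ d₂ : X} (h : joinQuad (a₁, a₂, b₁, b₂) (c₁, c₂, d₁, d₂) ∈ Q) :
    joinQuad (a₁, a₂, c₁, c₂) (b₁, b₂, d₁, d₂) ∈ Q := by
  rw [joinQuad_swap_faces_eq]
  exact hPQ.2.2.1 _ _ _ h

theorem IsWeakParallelepiped.exists_joinQuad_mem (hPQ : IsWeakParallelepiped P Q)
    {u₁ u₂ v₁ v₂ w₁ w₂ : X} (huv : (u₁, u₂, v₁, v₂) ∈ P) (huw : (u₁, u₂, w₁, w₂) ∈ P) :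
    ∃ t₁ t₂, (v₁, v₂, t₁, t₂) ∈ P ∧ joinQuad (u₁, u₂, v₁, v₂) (w₁, w₂, t₁, t₂) ∈ Q := by
  obtain ⟨t₁, ht₁⟩ := hPQ.1.2.2.2.2 u₁ v₁ w₁
  obtain ⟨t₂, ht₂⟩ := hPQ.2.2.2.2.2.2 u₁ u₂ v₁ v₂ w₁ w₂ t₁ huv ht₁ huw
  exact ⟨t₁, t₂, hPQ.2.1 _ ht₂ 1 true, ht₂⟩

theorem Qs_is_parallelogram_structure_general (X : Type)
    (P : Set (Quad X)) (Q : Set (Cube X)) (h : IsStrongParallelepiped P Q) (a b : X) :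
    IsWeakParallelogram
      {q : Quad {p : X × X // (a, b, p.1, p.2) ∈ P} |
        joinQuad (q.1.1.1, q.1.1.2, q.2.1.1.1, q.2.1.1.2)
          (q.2.2.1.1.1, q.2.2.1.1.2, q.2.2.2.1.1, q.2.2.2.1.2) ∈ Q} := by
  have hPQ := h.1
  obtain ⟨hP, -, -, hrefl, hsymm, htrans, -⟩ := h.1
  refine ⟨fun u v => hrefl _ (hP.mem_of_mem_of_mem u.2 v.2),
    fun _ _ _ _ => hsymm _ _, fun _ _ _ _ _ _ => htrans _ _ _,
    fun _ _ _ _ => hPQ.joinQuad_swap_mem, fun u v w => ?_⟩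
  obtain ⟨t₁, t₂, hvt, hQ⟩ :=
    hPQ.exists_joinQuad_mem (hP.mem_of_mem_of_mem u.2 v.2) (hP.mem_of_mem_of_mem u.2 w.2)
  exact ⟨⟨(t₁, t₂), hP.2.2.1 _ _ _ _ _ _ v.2 hvt⟩, hQ⟩

/-- For a strong parallelepiped structure `(P, Q)` on `X` and `s = ⟨a,b⟩`
in the base, the set `𝒬_s = 𝒬 ∩ (X_s)^{[2]}` (under the identification of `X⁸` with `(X²)⁴`
by grouping consecutive pairs) is a weak parallelogram structure on
`X_s = {(x,y) : ⟨x,y⟩ = s}`. -/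
theorem Qs_is_parallelogram_structure (X : Type) [Nonempty X]
    (P : Set (Quad X)) (Q : Set (Cube X)) (h : IsStrongParallelepiped P Q) (a b : X) :
    IsWeakParallelogram
      {q : Quad {p : X × X // (a, b, p.1, p.2) ∈ P} |
        joinQuad (q.1.1.1, q.1.1.2, q.2.1.1.1, q.2.1.1.2)
          (q.2.2.1.1.1, q.2.2.1.1.2, q.2.2.2.1.1, q.2.2.2.1.2) ∈ Q} :=
  Qs_is_parallelogram_structure_general X P Q h a b

end HK
end

section
/- Let (𝒫,𝒬) be a strong parallelepiped structure on a nonempty set X with structure group 𝒢 and fiber group F, the latter regarded as a subgroup of 𝒢 via u ↦ (x ↦ u·x). Let G be a subgroup of 𝒢 containing F that acts transitively on X, let i ∈ X be the basepoint, let Γ be the stabilizer of i in G, and identify X with G/Γ via gΓ ↦ g·i. Then G₂ ⊆ F ⊆ Z(G) and Γ ∩ F = {1}, and under this identification the parallelepiped structure (𝒫,𝒬) coincides with the nilparallelepiped structure (𝒫_X,𝒬_X) associated to G, F and Γ, i.e. 𝒫 = π^{[2]}(G^{[2,1]}·F^{[2]}) and 𝒬 = π^{[3]}(G^{[3,2]}·F^{[3,1]})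 where π: G → G/Γ is the projection. -/
open scoped Pointwise

namespace HK

variable {X Y : Type}

/-!
Inside the structure group, the fiber group `F` consists of the permutations `τ` for which all
vertical parallelograms `(x, x, x, τ x)` are `≈`-equivalent. Uniqueness of the eighth vertex of a
parallelepiped makes `F` central and free, and comparing the two completions `τ σ c` and `σ τ c`
of `(c, σ c, τ c, ·)` puts every commutator in `F`.

The generators of `G^{[2,1]}`, `F^{[2]}`, `G^{[3,2]}` and `F^{[3,1]}` preserve `𝒫` resp. `𝒬`, so
the orbits of the constant quadruple and cube at `i` lie in `𝒫` and `𝒬`. Conversely, transitivity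
matches a parallelogram `(a, b, c, d)` at three vertices with `(g, g e, g k, g e k) · i`; the
fourth vertex then differs from `d` by a vertical parallelogram, which a fiber translation
corrects. For a parallelepiped the same correction on three faces fixes seven vertices, and the
eighth is forced by uniqueness.
-/

open Equiv (Perm swap)
open MulAction (stabilizer mem_stabilizer_set)
open scoped commutatorElement

theorem cube_ext {x y : Cube X} (hxy : ∀ a b c, x ![a, b, c] = y ![a, b, c]) : x = y := by
  funext v
  revert v
  simp only [Fin.forall_fin_succ_pi, Fin.forall_fin_zero_pi]
  exact hxy

theorem joinQuad_face_zero (x : Cube X) : joinQuad (face x 0 false) (face x 0 true) = x :=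
  cube_ext fun a b c => by cases a <;> cases b <;> cases c <;> rfl

namespace IsWeakParallelogram

variable {P : Set (Quad X)} (hP : IsWeakParallelogram P) {a b c d e f : X}
include hP

theorem refl (a b : X) : (a, b, a, b) ∈ P := hP.1 a b

theorem symm (h : (a, b, c, d) ∈ P) : (c, d, a, b) ∈ P := hP.2.1 _ _ _ _ h

theorem trans (h₁ : (a, b, c, d) ∈ P) (h₂ : (c, d, e, f) ∈ P) : (a, b, e, f) ∈ P :=
  hP.2.2.1 _ _ _ _ _ _ h₁ h₂

theorem swap_mid (h : (a, b, c, d) ∈ P) : (a, c, b, d) ∈ P := hP.2.2.2.1 _ _ _ _ h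

theorem swap_pairs (h : (a, b, c, d) ∈ P) : (b, a, d, c) ∈ P :=
  hP.swap_mid (hP.symm (hP.swap_mid h))

theorem diag (a b : X) : (a, a, b, b) ∈ P := hP.swap_mid (hP.refl a b)

theorem vertical_symm (h : (a, a, a, b) ∈ P) : (b, b, b, a) ∈ P :=
  hP.trans (hP.diag b a) (hP.swap_pairs h)

theorem vertical_of_mem_of_mem (h : (a, b, c, d) ∈ P) (h' : (a, b, c, e) ∈ P) :
    (d, d, d, e) ∈ P :=
  hP.trans (hP.diag d c) (hP.swap_mid (hP.trans (hP.symm h) h'))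

theorem mem_of_vertical_of_mem (hv : (d, d, d, e) ∈ P) (h : (a, b, c, d) ∈ P) :
    (a, b, c, e) ∈ P :=
  hP.trans h (hP.swap_mid (hP.trans (hP.diag c d) hv))

end IsWeakParallelogram

namespace IsWeakParallelepiped

variable {P : Set (Quad X)} {Q : Set (Cube X)} (h : IsWeakParallelepiped P Q)
  {a b c d e f g k a' b' c' d' e' f' : X} {p q r : Quad X} {x y : Cube X}
include h

theorem parallelogram : IsWeakParallelogram P := h.1

theorem face_mem (hx : x ∈ Q) (j : Fin 3) (s : Bool) : face x j s ∈ P := h.2.1 x hx j s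

theorem mem_of_comp_cubeSym_eq (hx : x ∈ Q) (σ : Perm (Fin 3)) (c : Vtx)
    (hy : x ∘ cubeSym σ c = y) : y ∈ Q :=
  hy ▸ h.2.2.1 σ c x hx

theorem join_refl (hp : p ∈ P) : joinQuad p p ∈ Q := h.2.2.2.1 p hp

theorem join_symm (hpq : joinQuad p q ∈ Q) : joinQuad q p ∈ Q := h.2.2.2.2.1 p q hpq

theorem join_trans (hpq : joinQuad p q ∈ Q) (hqr : joinQuad q r ∈ Q) : joinQuad p r ∈ Q :=
  h.2.2.2.2.2.1 p q r hpq hqr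

theorem join_swap01 (hx : joinQuad (a, b, c, d) (e, f, g, k) ∈ Q) :
    joinQuad (a, b, e, f) (c, d, g, k) ∈ Q :=
  h.mem_of_comp_cubeSym_eq hx (swap 0 1) (fun _ => false) <|
    cube_ext fun u v w => by cases u <;> cases v <;> cases w <;> rfl

theorem join_swap02 (hx : joinQuad (a, b, c, d) (e, f, g, k) ∈ Q) :
    joinQuad (a, e, c, g) (b, f, d, k) ∈ Q :=
  h.mem_of_comp_cubeSym_eq hx (swap 0 2) (fun _ => false) <|
    cube_ext fun u v w => by cases u <;> cases v <;> cases w <;> rfl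

theorem join_swap12 (hx : joinQuad (a, b, c, d) (e, f, g, k) ∈ Q) :
    joinQuad (a, c, b, d) (e, g, f, k) ∈ Q :=
  h.mem_of_comp_cubeSym_eq hx (swap 1 2) (fun _ => false) <|
    cube_ext fun u v w => by cases u <;> cases v <;> cases w <;> rfl

theorem join_flip1 (hx : joinQuad (a, b, c, d) (e, f, g, k) ∈ Q) :
    joinQuad (c, d, a, b) (g, k, e, f) ∈ Q :=
  h.mem_of_comp_cubeSym_eq hx 1 ![false, true, false] <|
    cube_ext fun u v w => by cases u <;> cases v <;> cases w <;> rfl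

theorem join_flip2 (hx : joinQuad (a, b, c, d) (e, f, g, k) ∈ Q) :
    joinQuad (b, a, d, c) (f, e, k, g) ∈ Q :=
  h.mem_of_comp_cubeSym_eq hx 1 ![false, false, true] <|
    cube_ext fun u v w => by cases u <;> cases v <;> cases w <;> rfl

theorem join_trans' (h₁ : joinQuad (a, b, c, d) (a', b', c', d') ∈ Q)
    (h₂ : joinQuad (c, d, e, f) (c', d', e', f') ∈ Q) :
    joinQuad (a, b, e, f) (a', b', e', f') ∈ Q :=
  h.join_swap01 (h.join_trans (h.join_swap01 h₁) (h.join_swap01 h₂))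

theorem join_of_mem (hp : (a, b, a', b') ∈ P) : joinQuad (a, b, a, b) (a', b', a', b') ∈ Q :=
  h.join_swap01 (h.join_refl hp)

theorem join_vertical_symm (hx : joinQuad (a, a, a, b) (a', a', a', b') ∈ Q) :
    joinQuad (b, b, b, a) (b', b', b', a') ∈ Q :=
  h.join_trans' (h.join_flip1 (h.join_swap12 (h.join_of_mem (h.face_mem hx 2 true))))
    (h.join_flip2 hx)

theorem join_orbit_mem {σ : Perm X} (hσ : σ ∈ structSet P Q) (hp : (a, b, c, d) ∈ P) :
    joinQuad (a, σ a, b, σ b) (c, σ c, d, σ d) ∈ Q :=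
  h.join_swap01 (h.join_flip2 (h.join_swap02 (hσ _ hp).2))

theorem orbit_mem {σ : Perm X} (hσ : σ ∈ structSet P Q) (a b : X) : (a, σ a, b, σ b) ∈ P :=
  h.face_mem (h.join_orbit_mem hσ (h.parallelogram.diag a b)) 1 false

end IsWeakParallelepiped

/-- `τ` is the action `x ↦ u · x` of the fiber group element `u = [x, x, x, τ x]`, which must
not depend on `x`. -/
def fiberGroup {P : Set (Quad X)} {Q : Set (Cube X)} (h : IsWeakParallelepiped P Q) :
    Subgroup (Perm X) where
  carrier := {τ | ∀ x y, joinQuad (x, x, x, τ x) (y, y, y, τ y) ∈ Q}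
  one_mem' x y := h.join_of_mem (h.parallelogram.diag x y)
  mul_mem' {σ τ} hσ hτ x y := by
    have hW := h.join_swap12 (h.join_of_mem (h.face_mem (hτ x y) 1 true))
    exact h.join_trans' (hτ x y)
      (h.join_swap12 (h.join_trans' hW (h.join_swap12 (hσ (τ x) (τ y)))))
  inv_mem' {τ} hτ x y := by
    simpa using h.join_vertical_symm (hτ (τ⁻¹ x) (τ⁻¹ y))

namespace IsWeakParallelepiped

variable {P : Set (Quad X)} {Q : Set (Cube X)} (h : IsWeakParallelepiped P Q) {σ τ : Perm X}
include h

theorem vertical_mem_of_mem_fiberGroup (hτ : τ ∈ fiberGroup h) (x : X) : (x, x, x, τ x) ∈ P :=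
  h.face_mem (hτ x x) 0 false

theorem exists_actsRel_iff_mem_fiberGroup (i : X) :
    (∃ w : Quad X, VerticalQ P i w ∧ ∀ x, actsRel P Q w x (τ x)) ↔ τ ∈ fiberGroup h := by
  constructor
  · rintro ⟨w, -, hw⟩ x y
    exact h.join_trans (hw x).2 (h.join_symm (hw y).2)
  · intro hτ
    exact ⟨(i, i, i, τ i),
      ⟨h.parallelogram.refl i i, h.parallelogram.refl i i, h.vertical_mem_of_mem_fiberGroup hτ i⟩,
      fun x => ⟨h.vertical_mem_of_mem_fiberGroup hτ x, hτ x i⟩⟩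

theorem commutatorElement_mem_fiberGroup (hσ : σ ∈ structSet P Q) (hτ : τ ∈ structSet P Q) :
    ⁅σ, τ⁆ ∈ fiberGroup h := by
  -- `τ (σ c)` and `σ (τ c)` both complete `(c, σ c, τ c, ·)` to a parallelogram, naturally in `c`
  suffices key : ∀ c d, joinQuad (τ (σ c), τ (σ c), τ (σ c), σ (τ c))
      (τ (σ d), τ (σ d), τ (σ d), σ (τ d)) ∈ Q by
    intro x y
    simpa [commutatorElement_def] using key (σ⁻¹ (τ⁻¹ x)) (σ⁻¹ (τ⁻¹ y))
  intro c d
  have hσ₀ := h.join_orbit_mem hσ (h.parallelogram.diag c d)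
  have hτ₀ := h.join_orbit_mem hτ (h.parallelogram.diag c d)
  have hτσ := h.join_swap12 (h.join_orbit_mem hτ (h.face_mem hσ₀ 1 false))
  have hστ := h.join_orbit_mem hσ (h.face_mem hτ₀ 1 false)
  have hτσ_στ := h.join_swap12 (h.join_trans' (h.join_flip1 hτσ) hστ)
  have hτ_σ := h.join_trans' (h.join_flip1 (h.join_swap12 hτ₀)) (h.join_swap12 hσ₀)
  have hτ_τσ := h.join_trans' hτ_σ
    (h.join_swap12 (h.join_orbit_mem hτ (h.parallelogram.diag (σ c) (σ d))))
  exact h.join_trans' (h.join_flip1 hτ_τσ) hτσ_στ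

end IsWeakParallelepiped

namespace IsStrongParallelepiped

variable {P : Set (Quad X)} {Q : Set (Cube X)} (h : IsStrongParallelepiped P Q)
  {a b c d e f g k k' : X} {σ τ : Perm X}
include h

theorem eq_of_join_mem (h₁ : joinQuad (a, b, c, d) (e, f, g, k) ∈ Q)
    (h₂ : joinQuad (a, b, c, d) (e, f, g, k') ∈ Q) : k = k' := by
  obtain ⟨_, -, huniq⟩ := h.2 a b c d e f g
    (h.1.face_mem h₁ 0 false) (h.1.face_mem h₁ 2 false) (h.1.face_mem h₁ 1 false)
  exact (huniq k h₁).trans (huniq k' h₂).symm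

theorem eq_of_forall_ne_top {x y : Cube X} (hx : x ∈ Q) (hy : y ∈ Q)
    (hxy : ∀ v, v ≠ ![true, true, true] → x v = y v) : x = y := by
  rw [← joinQuad_face_zero x] at hx
  rw [← joinQuad_face_zero y] at hy
  simp (disch := decide) only [face, hxy] at hx
  have htop := h.eq_of_join_mem hx hy
  exact cube_ext fun a b c =>
    if habc : ![a, b, c] = ![true, true, true] then habc ▸ htop else hxy _ habc

theorem commute_of_mem_fiberGroup (hσ : σ ∈ structSet P Q) (hτ : τ ∈ fiberGroup h.1) :
    Commute σ τ := by
  refine Equiv.ext fun y => ?_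
  have hv := h.1.vertical_mem_of_mem_fiberGroup hτ y
  exact h.eq_of_join_mem (h.1.join_refl (hσ _ hv).1)
    (h.1.join_trans (hσ _ hv).2 (h.1.join_symm (hτ (σ y) y)))

theorem eq_one_of_mem_fiberGroup_of_apply_eq {x : X} (hτ : τ ∈ fiberGroup h.1) (hx : τ x = x) :
    τ = 1 := by
  refine Equiv.ext fun y => ?_
  have hyx := hτ y x
  rw [hx] at hyx
  exact h.eq_of_join_mem (h.1.join_symm hyx)
    (h.1.join_symm (h.1.join_of_mem (h.1.parallelogram.diag y x)))

theorem exists_mem_fiberGroup_apply_eq (hab : (a, a, a, b) ∈ P) :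
    ∃ τ ∈ fiberGroup h.1, τ a = b := by
  have hP := h.1.parallelogram
  have complete : ∀ {a b : X}, (a, a, a, b) ∈ P → ∀ x : X,
      ∃! y, joinQuad (a, a, a, b) (x, x, x, y) ∈ Q :=
    fun hab x => h.2 _ _ _ _ _ _ _ hab (hP.diag _ x) (hP.diag _ x)
  have hba := hP.vertical_symm hab
  choose f hf using fun x => (complete hab x).exists
  choose f' hf' using fun x => (complete hba x).exists
  refine ⟨⟨f, f', fun x => ?_, fun x => ?_⟩,
    fun x y => h.1.join_trans (h.1.join_symm (hf x)) (hf y),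
    (complete hab a).unique (hf a) (h.1.join_refl hab)⟩
  · exact (complete hba (f x)).unique (hf' (f x)) (h.1.join_vertical_symm (hf x))
  · exact (complete hab (f' x)).unique (hf (f' x)) (h.1.join_vertical_symm (hf' x))

theorem exists_mem_fiberGroup_mul_apply_eq {x : X} (hσ : σ ∈ structSet P Q)
    (hp : (a, b, c, d) ∈ P) (hp' : (a, b, c, σ x) ∈ P) :
    ∃ τ ∈ fiberGroup h.1, (σ * τ) x = d := by
  obtain ⟨τ, hτ, hτx⟩ :=
    h.exists_mem_fiberGroup_apply_eq (h.1.parallelogram.vertical_of_mem_of_mem hp' hp)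
  exact ⟨τ, hτ, by rw [(h.commute_of_mem_fiberGroup hσ hτ).eq]; exact hτx⟩

end IsStrongParallelepiped

section Actions

variable {M α : Type} [Group M] [MulAction M α]

instance : MulAction (Quad M) (Quad α) where
  smul y p := (y.1 • p.1, y.2.1 • p.2.1, y.2.2.1 • p.2.2.1, y.2.2.2 • p.2.2.2)
  one_smul _ := Prod.ext (one_smul _ _) <| Prod.ext (one_smul _ _) <|
    Prod.ext (one_smul _ _) (one_smul _ _)
  mul_smul _ _ _ := Prod.ext (mul_smul _ _ _) <| Prod.ext (mul_smul _ _ _) <|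
    Prod.ext (mul_smul _ _ _) (mul_smul _ _ _)

theorem mem_stabilizer_of_smul_mem {s : Set α} {y : M} (h₁ : ∀ b ∈ s, y • b ∈ s)
    (h₂ : ∀ b ∈ s, y⁻¹ • b ∈ s) : y ∈ stabilizer M s :=
  mem_stabilizer_set.2 fun b => ⟨fun hb => by simpa using h₂ _ hb, h₁ b⟩

theorem closure_le_stabilizer {S : Set M} {s : Set α} (hS : ∀ y ∈ S, y⁻¹ ∈ S)
    (hs : ∀ y ∈ S, ∀ b ∈ s, y • b ∈ s) : Subgroup.closure S ≤ stabilizer M s :=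
  (Subgroup.closure_le _).2 fun y hy => mem_stabilizer_of_smul_mem (hs y hy) (hs _ (hS y hy))

theorem cubeElt_inv (A : Set Vtx) (y : M) : (cubeElt A y)⁻¹ = cubeElt A y⁻¹ := by
  funext v
  by_cases hv : v ∈ A <;> simp [cubeElt, hv]

end Actions

theorem cubeElt_coe_smul {G : Subgroup (Perm X)} (A : Set Vtx) (g : G) (q : Cube X) :
    cubeElt A g • q = cubeElt A (g : Perm X) • q :=
  funext fun v => by by_cases hv : v ∈ A <;> simp [cubeElt, hv, Subgroup.smul_def, Perm.smul_def]

namespace IsWeakParallelepiped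

variable {P : Set (Quad X)} {Q : Set (Cube X)} (h : IsWeakParallelepiped P Q)
  {σ τ : Perm X} {q : Cube X}
include h

theorem smul_comp_cubeSym_mem {y : Cube (Perm X)} (hy : ∀ q ∈ Q, y • q ∈ Q)
    (σ : Perm (Fin 3)) (c : Vtx) (hq : q ∈ Q) : (y ∘ cubeSym σ c) • q ∈ Q := by
  have hinv : ∀ v, cubeSym σ⁻¹ (fun j => c (σ⁻¹ j)) (cubeSym σ c v) = v := fun v =>
    funext fun j => by simp [cubeSym]
  refine h.mem_of_comp_cubeSym_eq
    (hy _ (h.mem_of_comp_cubeSym_eq hq σ⁻¹ (fun j => c (σ⁻¹ j)) rfl)) σ c ?_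
  funext v
  exact congrArg (y (cubeSym σ c v) • ·) (congrArg q (hinv v))

theorem face_smul_mem (hσ : σ ∈ structSet P Q) {A : Set Vtx} (hA : IsFace3 A) (hq : q ∈ Q) :
    cubeElt A σ • q ∈ Q := by
  have hbase : ∀ q ∈ Q, cubeElt {v : Vtx | v 0 = false} σ • q ∈ Q := by
    intro q hq
    rw [← joinQuad_face_zero q] at hq
    convert h.join_trans (hσ _ (h.face_mem hq 0 false)).2 hq using 1
    exact cube_ext fun u v w => by
      cases u <;> cases v <;> cases w <;> simp [cubeElt, joinQuad, quadAt, map4, face, insert3]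
  obtain ⟨j, s, rfl⟩ := hA
  convert h.smul_comp_cubeSym_mem hbase (swap 0 j) (fun _ => s) hq using 2
  funext v
  simp [cubeElt, cubeSym]

theorem edge_smul_mem (hτ : τ ∈ fiberGroup h) {A : Set Vtx} (hA : IsEdge3 A) (hq : q ∈ Q) :
    cubeElt A τ • q ∈ Q := by
  have hbase : ∀ q ∈ Q, cubeElt {v : Vtx | v 0 = true ∧ v 1 = true} τ • q ∈ Q := by
    intro q hq
    rw [← joinQuad_face_zero q] at hq
    have hτq := h.join_swap02 (hτ (q ![true, true, false]) (q ![true, true, true]))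
    convert h.join_trans hq (h.join_trans' (h.join_refl (h.face_mem hq 0 true)) hτq) using 1
    exact cube_ext fun u v w => by
      cases u <;> cases v <;> cases w <;> simp [cubeElt, joinQuad, quadAt, face, insert3]
  obtain ⟨j, k, s, t, hjk, rfl⟩ := hA
  obtain ⟨σ, hσj, hσk⟩ : ∃ σ : Perm (Fin 3), σ 0 = j ∧ σ 1 = k := by revert j k; decide
  convert h.smul_comp_cubeSym_mem hbase σ ![!s, !t, false] hq using 2
  funext v
  simp [cubeElt, cubeSym, hσj, hσk]

theorem apply_mem_of_mem_fiberGroup {τ₁ τ₂ τ₃ τ₄ : Perm X} (h₁ : τ₁ ∈ fiberGroup h)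
    (h₂ : τ₂ ∈ fiberGroup h) (h₃ : τ₃ ∈ fiberGroup h) (h₄ : τ₄ ∈ fiberGroup h) {a b c d : X}
    (hp : (a, b, c, d) ∈ P) : (τ₁ a, τ₂ b, τ₃ c, τ₄ d) ∈ P := by
  have hP := h.parallelogram
  have hv := fun {τ} (hτ : τ ∈ fiberGroup h) x => h.vertical_mem_of_mem_fiberGroup hτ x
  have hp₄ := hP.mem_of_vertical_of_mem (hv h₄ d) hp
  have hp₃ := hP.swap_pairs (hP.mem_of_vertical_of_mem (hv h₃ c) (hP.swap_pairs hp₄))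
  have hp₂ := hP.symm (hP.mem_of_vertical_of_mem (hv h₂ b) (hP.symm hp₃))
  exact hP.symm (hP.swap_pairs
    (hP.mem_of_vertical_of_mem (hv h₁ a) (hP.swap_pairs (hP.symm hp₂))))

theorem const_mem (i : X) : (fun _ => i : Cube X) ∈ Q := by
  convert h.join_refl (h.parallelogram.refl i i) using 1
  exact cube_ext fun u v w => by cases u <;> cases v <;> cases w <;> rfl

variable {G : Subgroup (Perm X)}

theorem edgeGroup2_le_stabilizer (hG : (G : Set (Perm X)) ⊆ structSet P Q) :
    edgeGroup2 G ≤ stabilizer (Quad G) P := by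
  have hP := h.parallelogram
  have hgg11 : ∀ g : G, ∀ {a b c d : X}, (a, b, c, d) ∈ P →
      ((g : Perm X) a, (g : Perm X) b, c, d) ∈ P :=
    fun g a b _ _ hp => hP.trans (h.face_mem (hG g.2 _ (hP.refl a b)).2 1 false) hp
  refine closure_le_stabilizer ?_ ?_
  · rintro _ ⟨g, rfl | rfl | rfl⟩ <;> exact ⟨g⁻¹, by simp⟩
  · rintro _ ⟨g, rfl | rfl | rfl⟩ ⟨a, b, c, d⟩ hp
    · exact hgg11 g hp
    · exact hP.swap_mid (hgg11 g (hP.swap_mid hp))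
    · exact (hG g.2 _ hp).1

theorem quadSub_le_stabilizer :
    quadSub ((fiberGroup h).comap G.subtype) ≤ stabilizer (Quad G) P := by
  have key : ∀ y ∈ quadSub ((fiberGroup h).comap G.subtype), ∀ p ∈ P, y • p ∈ P := by
    rintro ⟨y₁, y₂, y₃, y₄⟩ ⟨h₁, h₂, h₃, h₄⟩ ⟨a, b, c, d⟩ hp
    exact h.apply_mem_of_mem_fiberGroup h₁ h₂ h₃ h₄ hp
  exact fun y hy => mem_stabilizer_of_smul_mem (key y hy) (key _ (inv_mem hy))

theorem faceGroup_le_stabilizer (hG : (G : Set (Perm X)) ⊆ structSet P Q) :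
    faceGroup G ≤ stabilizer (Cube G) Q := by
  refine closure_le_stabilizer ?_ ?_
  · rintro _ ⟨g, A, hA, rfl⟩
    exact ⟨g⁻¹, A, hA, cubeElt_inv A g⟩
  · rintro _ ⟨g, A, hA, rfl⟩ q hq
    rw [cubeElt_coe_smul]
    exact h.face_smul_mem (hG g.2) hA hq

theorem edgeGroup3_le_stabilizer :
    edgeGroup3 ((fiberGroup h).comap G.subtype) ≤ stabilizer (Cube G) Q := by
  refine closure_le_stabilizer ?_ ?_
  · rintro _ ⟨u, hu, A, hA, rfl⟩
    exact ⟨u⁻¹, inv_mem hu, A, hA, cubeElt_inv A u⟩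
  · rintro _ ⟨u, hu, A, hA, rfl⟩ q hq
    rw [cubeElt_coe_smul]
    exact h.edge_smul_mem hu hA hq

theorem map4_image_subset (hG : (G : Set (Perm X)) ⊆ structSet P Q) (i : X) :
    map4 (fun g : G => (g : Perm X) i) '' ((edgeGroup2 G : Set (Quad G)) *
      (quadSub ((fiberGroup h).comap G.subtype) : Set (Quad G))) ⊆ P := by
  rintro _ ⟨_, ⟨y, hy, z, hz, rfl⟩, rfl⟩
  exact (mem_stabilizer_set.1 (mul_mem (h.edgeGroup2_le_stabilizer hG hy)
    (h.quadSub_le_stabilizer hz)) (i, i, i, i)).2 (h.parallelogram.refl i i)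

theorem mapCube_image_subset (hG : (G : Set (Perm X)) ⊆ structSet P Q) (i : X) :
    mapCube (fun g : G => (g : Perm X) i) '' ((faceGroup G : Set (Cube G)) *
      (edgeGroup3 ((fiberGroup h).comap G.subtype) : Set (Cube G))) ⊆ Q := by
  rintro _ ⟨_, ⟨y, hy, z, hz, rfl⟩, rfl⟩
  exact (mem_stabilizer_set.1 (mul_mem (h.faceGroup_le_stabilizer hG hy)
    (h.edgeGroup3_le_stabilizer hz)) _).2 (h.const_mem i)

theorem commutator_le_comap_fiberGroup (hG : (G : Set (Perm X)) ⊆ structSet P Q) :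
    commutator G ≤ (fiberGroup h).comap G.subtype := by
  rw [commutator_def, Subgroup.commutator_le]
  exact fun σ _ τ _ => h.commutatorElement_mem_fiberGroup (hG σ.2) (hG τ.2)

end IsWeakParallelepiped

section GroupElements

variable {M : Type} [Group M]

theorem parallelogram_mem_edgeGroup2 (g e k : M) :
    (g, g * e, g * k, g * e * k) ∈ edgeGroup2 M := by
  have hdiag : ∀ x : M, (x, x, x, x) ∈ edgeGroup2 M :=
    fun x => Subgroup.subset_closure ⟨x, Or.inr (Or.inr rfl)⟩
  have he : (1, e, 1, e) ∈ edgeGroup2 M := by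
    simpa using mul_mem (hdiag e) (Subgroup.subset_closure ⟨e⁻¹, Or.inr (Or.inl rfl)⟩)
  have hk : (1, 1, k, k) ∈ edgeGroup2 M := by
    simpa using mul_mem (hdiag k) (Subgroup.subset_closure ⟨k⁻¹, Or.inl rfl⟩)
  simpa [mul_assoc] using mul_mem (mul_mem (hdiag g) he) hk

theorem parallelepiped_mem_faceGroup_mul_edgeGroup3 {F : Subgroup M} (g e k l : M)
    {u₁ u₂ u₃ : M} (hu₁ : u₁ ∈ F) (hu₂ : u₂ ∈ F) (hu₃ : u₃ ∈ F) :
    (fun v : Vtx => g * (bif v 2 then e else 1) * (bif v 1 then k else 1) *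
      (bif v 0 then l else 1) * ((bif v 1 && v 2 then u₁ else 1) *
        (bif v 0 && v 2 then u₂ else 1) * (bif v 0 && v 1 then u₃ else 1))) ∈
      (faceGroup M : Set (Cube M)) * edgeGroup3 F := by
  have hface : ∀ (x : M) (j : Fin 3) (s : Bool), cubeElt {v : Vtx | v j = s} x ∈ faceGroup M :=
    fun x j s => Subgroup.subset_closure ⟨x, _, ⟨j, s, rfl⟩, rfl⟩
  have hedge : ∀ u ∈ F, ∀ j k : Fin 3, j ≠ k →
      cubeElt {v : Vtx | v j = true ∧ v k = true} u ∈ edgeGroup3 F :=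
    fun u hu j k hjk => Subgroup.subset_closure ⟨u, hu, _, ⟨j, k, true, true, hjk, rfl⟩, rfl⟩
  refine ⟨_, mul_mem (mul_mem (mul_mem (mul_mem (hface g 0 false) (hface g 0 true))
    (hface e 2 true)) (hface k 1 true)) (hface l 0 true), _,
    mul_mem (mul_mem (hedge u₁ hu₁ 1 2 (by decide)) (hedge u₂ hu₂ 0 2 (by decide)))
      (hedge u₃ hu₃ 0 1 (by decide)), ?_⟩
  exact cube_ext fun a b c => by cases a <;> cases b <;> cases c <;> simp [cubeElt]

end GroupElements

theorem exists_mul_apply_eq {G : Subgroup (Perm X)} {i : X}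
    (htrans : ∀ x, ∃ g : G, (g : Perm X) i = x) (g : G) (x : X) :
    ∃ e : G, ((g * e : G) : Perm X) i = x :=
  let ⟨e, he⟩ := htrans ((g : Perm X)⁻¹ x)
  ⟨e, by simp [he]⟩

namespace IsStrongParallelepiped

variable {P : Set (Quad X)} {Q : Set (Cube X)} (h : IsStrongParallelepiped P Q)
  {G : Subgroup (Perm X)} (hG : (G : Set (Perm X)) ⊆ structSet P Q) (hFG : fiberGroup h.1 ≤ G)
  {i : X}
include hG

theorem comap_fiberGroup_le_center : (fiberGroup h.1).comap G.subtype ≤ Subgroup.center G :=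
  fun _ hu => Subgroup.mem_center_iff.2 fun g =>
    Subtype.ext (h.commute_of_mem_fiberGroup (hG g.2) hu).eq

include hFG

theorem exists_mem_comap_fiberGroup_mul_apply_eq {a b c d : X} (hp : (a, b, c, d) ∈ P) (g e k : G)
    (ha : (g : Perm X) i = a) (hb : ((g * e : G) : Perm X) i = b)
    (hc : ((g * k : G) : Perm X) i = c) :
    ∃ u ∈ (fiberGroup h.1).comap G.subtype, ((g * e * k * u : G) : Perm X) i = d := by
  have hp' : (a, b, c, ((g * e * k : G) : Perm X) i) ∈ P := by
    subst ha hb hc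
    exact (hG g.2 _ (h.1.orbit_mem (hG e.2) i ((k : Perm X) i))).1
  obtain ⟨τ, hτ, hτd⟩ := h.exists_mem_fiberGroup_mul_apply_eq (hG (g * e * k).2) hp hp'
  exact ⟨⟨τ, hFG hτ⟩, hτ, hτd⟩

variable (htrans : ∀ x, ∃ g : G, (g : Perm X) i = x)
include htrans

theorem subset_map4_image :
    P ⊆ map4 (fun g : G => (g : Perm X) i) '' ((edgeGroup2 G : Set (Quad G)) *
      (quadSub ((fiberGroup h.1).comap G.subtype) : Set (Quad G))) := by
  rintro ⟨a, b, c, d⟩ hp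
  obtain ⟨g, rfl⟩ := htrans a
  obtain ⟨e, rfl⟩ := exists_mul_apply_eq htrans g b
  obtain ⟨k, rfl⟩ := exists_mul_apply_eq htrans g c
  obtain ⟨u, hu, rfl⟩ := h.exists_mem_comap_fiberGroup_mul_apply_eq hG hFG hp g e k rfl rfl rfl
  refine ⟨(g, g * e, g * k, g * e * k) * (1, 1, 1, u), Set.mul_mem_mul
    (parallelogram_mem_edgeGroup2 g e k) ⟨one_mem _, one_mem _, one_mem _, hu⟩, ?_⟩
  simp [map4]

theorem subset_mapCube_image :
    Q ⊆ mapCube (fun g : G => (g : Perm X) i) '' ((faceGroup G : Set (Cube G)) *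
      (edgeGroup3 ((fiberGroup h.1).comap G.subtype) : Set (Cube G))) := by
  intro q hq
  obtain ⟨g, hg⟩ := htrans (q ![false, false, false])
  obtain ⟨e, he⟩ := exists_mul_apply_eq htrans g (q ![false, false, true])
  obtain ⟨k, hk⟩ := exists_mul_apply_eq htrans g (q ![false, true, false])
  obtain ⟨l, hl⟩ := exists_mul_apply_eq htrans g (q ![true, false, false])
  obtain ⟨u₁, hu₁, h₁⟩ := h.exists_mem_comap_fiberGroup_mul_apply_eq hG hFG
    (h.1.face_mem hq 0 false) g e k hg he hk
  obtain ⟨u₂, hu₂, h₂⟩ := h.exists_mem_comap_fiberGroup_mul_apply_eq hG hFG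
    (h.1.face_mem hq 1 false) g e l hg he hl
  obtain ⟨u₃, hu₃, h₃⟩ := h.exists_mem_comap_fiberGroup_mul_apply_eq hG hFG
    (h.1.face_mem hq 2 false) g k l hg hk hl
  have hmem := parallelepiped_mem_faceGroup_mul_edgeGroup3 g e k l hu₁ hu₂ hu₃
  refine ⟨_, hmem, h.eq_of_forall_ne_top (h.1.mapCube_image_subset hG i ⟨_, hmem, rfl⟩) hq ?_⟩
  simp only [Subgroup.coe_mul, Perm.mul_apply] at he hk hl h₁ h₂ h₃
  simp only [Fin.forall_fin_succ_pi, Fin.forall_fin_zero_pi, Bool.forall_bool]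
  simp [mapCube, insert3, hg, he, hk, hl, h₁, h₂, h₃]

end IsStrongParallelepiped

theorem structure_theorem_general (X : Type)
    (P : Set (Quad X)) (Q : Set (Cube X)) (h : IsStrongParallelepiped P Q) (i : X)
    (G : Subgroup (Equiv.Perm X))
    (hG : (G : Set (Equiv.Perm X)) ⊆ structSet P Q)
    (hFG : {g : Equiv.Perm X | ∃ w : Quad X, VerticalQ P i w ∧ ∀ x : X,
      actsRel P Q w x (g x)} ⊆ (G : Set (Equiv.Perm X)))
    (htrans : ∀ x y : X, ∃ g ∈ G, g x = y) :
    (∃ Fsub : Subgroup ↥G, (Fsub : Set ↥G) = {g : ↥G | ∃ w : Quad X,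
      VerticalQ P i w ∧ ∀ x : X, actsRel P Q w x ((g : Equiv.Perm X) x)}) ∧
    (∀ Fsub : Subgroup ↥G, (Fsub : Set ↥G) = {g : ↥G | ∃ w : Quad X,
        VerticalQ P i w ∧ ∀ x : X, actsRel P Q w x ((g : Equiv.Perm X) x)} →
      commutator ↥G ≤ Fsub ∧
      Fsub ≤ Subgroup.center ↥G ∧
      (∀ g : ↥G, g ∈ Fsub → (g : Equiv.Perm X) i = i → g = 1) ∧
      P = map4 (fun g : ↥G => (g : Equiv.Perm X) i) ''
        ((edgeGroup2 ↥G : Set (Quad ↥G)) * (quadSub Fsub : Set (Quad ↥G))) ∧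
      Q = mapCube (fun g : ↥G => (g : Equiv.Perm X) i) ''
        ((faceGroup ↥G : Set (Cube ↥G)) * (edgeGroup3 Fsub : Set (Cube ↥G)))) := by
  have hfiber : {g : ↥G | ∃ w : Quad X, VerticalQ P i w ∧ ∀ x : X,
      actsRel P Q w x ((g : Equiv.Perm X) x)} = (fiberGroup h.1).comap G.subtype :=
    Set.ext fun _ => h.1.exists_actsRel_iff_mem_fiberGroup i
  have hFG' : fiberGroup h.1 ≤ G :=
    fun _ hτ => hFG ((h.1.exists_actsRel_iff_mem_fiberGroup i).2 hτ)
  have htrans' : ∀ x, ∃ g : G, (g : Perm X) i = x := fun x =>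
    let ⟨g, hg, hgx⟩ := htrans i x
    ⟨⟨g, hg⟩, hgx⟩
  refine ⟨⟨_, hfiber.symm⟩, fun F hF => ?_⟩
  obtain rfl : F = (fiberGroup h.1).comap G.subtype := SetLike.coe_injective (hF.trans hfiber)
  exact ⟨h.1.commutator_le_comap_fiberGroup hG, h.comap_fiberGroup_le_center hG,
    fun g hg hgi => Subtype.ext (h.eq_one_of_mem_fiberGroup_of_apply_eq hg hgi),
    (h.subset_map4_image hG hFG' htrans').antisymm (h.1.map4_image_subset hG i),
    (h.subset_mapCube_image hG hFG' htrans').antisymm (h.1.mapCube_image_subset hG i)⟩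

/-- (Structure theorem.) Let `(P, Q)` be a strong parallelepiped structure
on `X`, `G` a subgroup of the structure group containing the fiber group `F` (acting as the
permutations `x ↦ u·x`) and acting transitively on `X`, and let `i ∈ X`.  Then, with `Fsub`
the copy of `F` inside `G`, one has `G₂ ⊆ F ⊆ Z(G)`, the stabilizer `Γ` of `i` meets `F`
trivially, and under the identification `G/Γ ≅ X`, `g·Γ ↦ g·i`, the structure `(P, Q)`
coincides with the nilparallelepiped structure associated to `G`, `F` and `Γ`:
`P` and `Q` are the images of `G^{[2,1]}·F^{[2]}` and `G^{[3,2]}·F^{[3,1]}` under `g ↦ g·i`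
applied coordinatewise. -/
theorem structure_theorem (X : Type) [Nonempty X]
    (P : Set (Quad X)) (Q : Set (Cube X)) (h : IsStrongParallelepiped P Q) (i : X)
    (G : Subgroup (Equiv.Perm X))
    (hG : (G : Set (Equiv.Perm X)) ⊆ structSet P Q)
    (hFG : {g : Equiv.Perm X | ∃ w : Quad X, VerticalQ P i w ∧ ∀ x : X,
      actsRel P Q w x (g x)} ⊆ (G : Set (Equiv.Perm X)))
    (htrans : ∀ x y : X, ∃ g ∈ G, g x = y) :
    (∃ Fsub : Subgroup ↥G, (Fsub : Set ↥G) = {g : ↥G | ∃ w : Quad X,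
      VerticalQ P i w ∧ ∀ x : X, actsRel P Q w x ((g : Equiv.Perm X) x)}) ∧
    (∀ Fsub : Subgroup ↥G, (Fsub : Set ↥G) = {g : ↥G | ∃ w : Quad X,
        VerticalQ P i w ∧ ∀ x : X, actsRel P Q w x ((g : Equiv.Perm X) x)} →
      commutator ↥G ≤ Fsub ∧
      Fsub ≤ Subgroup.center ↥G ∧
      (∀ g : ↥G, g ∈ Fsub → (g : Equiv.Perm X) i = i → g = 1) ∧
      P = map4 (fun g : ↥G => (g : Equiv.Perm X) i) ''
        ((edgeGroup2 ↥G : Set (Quad ↥G)) * (quadSub Fsub : Set (Quad ↥G))) ∧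
      Q = mapCube (fun g : ↥G => (g : Equiv.Perm X) i) ''
        ((faceGroup ↥G : Set (Cube ↥G)) * (edgeGroup3 Fsub : Set (Cube ↥G)))) :=
  structure_theorem_general X P Q h i G hG hFG htrans

end HK
end
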